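/- arXiv:1108.3632 — 2 statements merged into one kernel-verified Lean document; each statement's English description precedes it below -/
import Mathlib

section
/- Every tangent analytic word w can be written as a concatenation w = u·v of two 1-balanced words u and v. -/
/-- Helper for deleting one letter `c` from each maximal run of `c`s.
The flag is `true` when we are at the start of the word or just after a letter `≠ c`,
i.e. when the next occurrence of `c` starts a maximal run and must be deleted. -/
def delRunAux (c : Bool) : Bool → List Bool → List Bool
  | _, [] => []
  | del, a :: l =>
      if a = c then
        (if del then delRunAux c false l else a :: delRunAux c false l)
      else a :: delRunAux c true l

/-- Delete one letter `c` from each maximal run of `c`s in `w`. -/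
def delRun (c : Bool) (w : List Bool) : List Bool := delRunAux c true w

/-- `Desub w v` : `v` is a desubstitution of the nonempty word `w`
(letter `0` is `false`, letter `1` is `true`):
if `11` does not occur in `w` one may delete one `0` from each maximal run of `0`s,
and if `00` does not occur in `w` one may delete one `1` from each maximal run of `1`s. -/
def Desub (w v : List Bool) : Prop :=
  w ≠ [] ∧
    ((¬ [true, true] <:+: w ∧ v = delRun false w) ∨
     (¬ [false, false] <:+: w ∧ v = delRun true w))

/-- States of the three-state "diagonal" automaton. -/
inductive DiagState | Q | R | S
  deriving DecidableEq

/-- Transitions of the diagonal automaton: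
Q→R on 0, R→Q on 1, R→S on 0, S→R on 1. -/
def diagStep : DiagState → Bool → Option DiagState
  | .Q, false => some .R
  | .R, true  => some .Q
  | .R, false => some .S
  | .S, true  => some .R
  | _, _ => none

/-- States of the eight-state "non-oscillating diagonal" automaton. -/
inductive NOState | B | R | S | T | U | C | D | E
  deriving DecidableEq

/-- Transitions of the non-oscillating diagonal automaton:
B→R on 0, R→B on 1, R→S on 0, S→T on 1, T→S on 0, T→U on 1, U→E on 0, E→U on 1,
B→C on 1, C→D on 0, D→C on 1, D→E on 0. -/
def noStep : NOState → Bool → Option NOState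
  | .B, false => some .R
  | .B, true  => some .C
  | .R, false => some .S
  | .R, true  => some .B
  | .S, true  => some .T
  | .T, false => some .S
  | .T, true  => some .U
  | .U, false => some .E
  | .C, false => some .D
  | .D, false => some .E
  | .D, true  => some .C
  | .E, true  => some .U
  | _, _ => none

/-- The list of states visited when reading a word from state `q`
in a (partial deterministic) automaton, if the whole word can be read. -/
def autTraj {σ : Type} (step : σ → Bool → Option σ) : σ → List Bool → Option (List σ)
  | q, [] => some [q]
  | q, a :: l => (step q a).bind fun q' => (autTraj step q' l).map (q :: ·)

/-- A word is diagonal if it labels a path of the diagonal automaton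
(all states are initial and accepting). -/
def Diagonal (w : List Bool) : Prop := ∃ q : DiagState, (autTraj diagStep q w).isSome

/-- A word is non-oscillating diagonal if it labels a path of the non-oscillating
diagonal automaton (all states are initial and accepting). -/
def NonOscDiagonal (w : List Bool) : Prop := ∃ q : NOState, (autTraj noStep q w).isSome

/-- A word is tangent if some finite sequence of desubstitutions leads to a diagonal word. -/
def Tangent (w : List Bool) : Prop :=
  ∃ v, Relation.ReflTransGen Desub w v ∧ Diagonal v

/-- A word is tangent analytic if some finite sequence of desubstitutions leads to a
non-oscillating diagonal word. -/
def TangentAnalytic (w : List Bool) : Prop :=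
  ∃ v, Relation.ReflTransGen Desub w v ∧ NonOscDiagonal v

/-- A word is `k`-balanced if any two factors of the same length have numbers of `1`s
differing by at most `k`. -/
def BalancedWord (k : ℕ) (w : List Bool) : Prop :=
  ∀ u v : List Bool, u <:+: w → v <:+: w → u.length = v.length →
    |(u.count true : ℤ) - (v.count true : ℤ)| ≤ (k : ℤ)

/-- `pcount L n` is the complexity `p_n(L)`: the number of words of length `n` in `L`. -/
noncomputable def pcount (L : Set (List Bool)) (n : ℕ) : ℕ :=
  Set.ncard {w | w ∈ L ∧ w.length = n}

/-- The language `T^∞` of tangent words. -/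
def Tinf : Set (List Bool) := {w | Tangent w}

/-- The language `T^ω` of tangent analytic words. -/
def Tomega : Set (List Bool) := {w | TangentAnalytic w}

/-- A word `w ∈ L` is bispecial when `0w`, `1w`, `w0`, `w1` all belong to `L`. -/
def Bispecial (L : Set (List Bool)) (w : List Bool) : Prop :=
  w ∈ L ∧ (false :: w) ∈ L ∧ (true :: w) ∈ L ∧ (w ++ [false]) ∈ L ∧ (w ++ [true]) ∈ L

/-- The number of two-sided extensions `a·w·b` of `w` inside `L`. -/
noncomputable def extCount (L : Set (List Bool)) (w : List Bool) : ℕ :=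
  Set.ncard {p : Bool × Bool | (p.1 :: (w ++ [p.2])) ∈ L}

/-- A weak bispecial word of `L`. -/
def WeakBispecial (L : Set (List Bool)) (w : List Bool) : Prop :=
  Bispecial L w ∧ extCount L w = 2

/-- A strong bispecial word of `L`. -/
def StrongBispecial (L : Set (List Bool)) (w : List Bool) : Prop :=
  Bispecial L w ∧ extCount L w = 4

/-- `wb L n` : the number of weak bispecial words of length `n` in `L`. -/
noncomputable def wb (L : Set (List Bool)) (n : ℕ) : ℕ :=
  Set.ncard {w | WeakBispecial L w ∧ w.length = n}

/-- `sb L n` : the number of strong bispecial words of length `n` in `L`. -/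
noncomputable def sb (L : Set (List Bool)) (n : ℕ) : ℕ :=
  Set.ncard {w | StrongBispecial L w ∧ w.length = n}

/-- A language is factorial if it is closed under taking factors. -/
def FactorialLang (L : Set (List Bool)) : Prop :=
  ∀ w ∈ L, ∀ u : List Bool, u <:+: w → u ∈ L

/-- A language is extendable if every word extends on both sides within the language. -/
def ExtendableLang (L : Set (List Bool)) : Prop :=
  ∀ w ∈ L, (∃ a : Bool, (a :: w) ∈ L) ∧ (∃ b : Bool, (w ++ [b]) ∈ L)

/-!
Let `ψ` be the Sturmian substitution `0 ↦ 0, 1 ↦ 10`. A word without `11` is a factor of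
`0 ψ(v)`, where `v` is its desubstitution, and `0 ψ(·)` preserves 1-balancedness; exchanging the
letters handles the other kind of desubstitution. A factorization of a desubstitution lifts to a
factorization of the word into factors of the same kind, so it suffices to split non-oscillating
diagonal words. Reading the automaton, such a word is an alternating word followed by a word in
which, after deleting one `c` from each run of `c`s, at most one `c` is left; the latter is the
lift of a word with at most one `c`, hence balanced.
-/

section Balanced

variable {k : ℕ} {w : List Bool}

theorem BalancedWord.of_infix {u : List Bool} (h : BalancedWord k w) (hu : u <:+: w) :
    BalancedWord k u :=
  fun x y hx hy hxy => h x y (hx.trans hu) (hy.trans hu) hxy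

theorem BalancedWord.count_le_of_length_le {u v : List Bool} (h : BalancedWord k w)
    (hu : u <:+: w) (hv : v <:+: w) (huv : u.length ≤ v.length) :
    u.count true ≤ v.count true + k := by
  have hv' : v.take u.length <:+: w := (v.take_prefix _).isInfix.trans hv
  have hlen : u.length = (v.take u.length).length := by simp [huv]
  have hcount := (v.take_sublist u.length).count_le true
  have := (abs_le.mp (h u _ hu hv' hlen)).2
  omega

theorem balancedWord_of_count_true_le (h : w.count true ≤ k) : BalancedWord k w := by
  intro u v hu hv _
  have := hu.sublist.count_le true
  have := hv.sublist.count_le true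
  rw [abs_le]
  omega

theorem count_map_not (b : Bool) (l : List Bool) : (l.map not).count (!b) = l.count b :=
  List.count_map_of_injective l not Bool.not_injective b

theorem BalancedWord.map_not (h : BalancedWord k w) : BalancedWord k (w.map not) := by
  intro u v hu hv huv
  have hu' : u.map not <:+: w := Bool.involutive_not.list_map w ▸ hu.map not
  have hv' : v.map not <:+: w := Bool.involutive_not.list_map w ▸ hv.map not
  have hbal := h _ _ hu' hv' (by simpa using huv)
  have hu₁ : (u.map not).count true = u.count false := count_map_not false u
  have hv₁ : (v.map not).count true = v.count false := count_map_not false v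
  have := u.count_true_add_count_false
  have := v.count_true_add_count_false
  rw [abs_le] at hbal ⊢
  omega

theorem balancedWord_of_count_le (c : Bool) (h : w.count c ≤ k) : BalancedWord k w := by
  cases c
  · have hneg : (w.map not).count true ≤ k := by simpa using (count_map_not false w).trans_le h
    rw [← Bool.involutive_not.list_map w]
    exact (balancedWord_of_count_true_le hneg).map_not
  · exact balancedWord_of_count_true_le h

end Balanced

section Squares

variable {x a b : Bool} {l : List Bool}

theorem pair_infix_cons_iff :
    [x, x] <:+: a :: l ↔ (x = a ∧ [x] <+: l) ∨ [x, x] <:+: l := by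
  rw [List.infix_cons_iff, List.cons_prefix_cons]

theorem not_pair_infix_of_cons (h : ¬ [x, x] <:+: a :: l) : ¬ [x, x] <:+: l :=
  fun h' => h (List.infix_cons h')

theorem not_pair_infix_cons (hax : a ≠ x) (h : ¬ [x, x] <:+: l) : ¬ [x, x] <:+: a :: l := by
  rw [pair_infix_cons_iff]
  rintro (⟨rfl, -⟩ | h')
  exacts [hax rfl, h h']

theorem not_pair_infix_cons_cons (hab : a ≠ b) (h : ¬ [x, x] <:+: b :: l) :
    ¬ [x, x] <:+: a :: b :: l := by
  rw [pair_infix_cons_iff]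
  rintro (⟨rfl, hb⟩ | h')
  · exact hab (List.cons_prefix_cons.mp hb).1
  · exact h h'

end Squares

section DelRun

variable {c : Bool}

theorem delRunAux_true_cons_self {l : List Bool} :
    delRunAux c true (c :: l) = delRunAux c false l := by
  simp [delRunAux]

theorem delRunAux_false_cons_self {l : List Bool} :
    delRunAux c false (c :: l) = c :: delRunAux c false l := by
  simp [delRunAux]

theorem delRunAux_cons_of_ne {a d : Bool} {l : List Bool} (h : a ≠ c) :
    delRunAux c d (a :: l) = a :: delRun c l := by
  simp [delRunAux, delRun, h]

theorem count_delRun_eq_zero : ∀ {l : List Bool}, ¬ [c, c] <:+: l → (delRun c l).count c = 0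
  | [], _ => rfl
  | [a], _ => by by_cases h : a = c <;> simp [delRun, delRunAux, h]
  | a :: b :: l, h => by
    have ih := count_delRun_eq_zero (not_pair_infix_of_cons (not_pair_infix_of_cons h))
    by_cases hac : a = c
    · subst hac
      have hba : b ≠ a := by
        rintro rfl
        exact h (List.prefix_append [b, b] l).isInfix
      rw [delRun, delRunAux_true_cons_self, delRunAux_cons_of_ne hba, List.count_cons_of_ne hba,
        ih]
    · rw [delRun, delRunAux_cons_of_ne hac, List.count_cons_of_ne hac]
      exact count_delRun_eq_zero (not_pair_infix_of_cons h)

theorem map_not_delRunAux : ∀ {d : Bool} {l : List Bool},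
    (delRunAux c d l).map not = delRunAux (!c) d (l.map not)
  | _, [] => rfl
  | d, a :: l => by
    by_cases hac : a = c
    · rw [hac]
      cases d <;> simp [delRunAux, map_not_delRunAux]
    · have : (!a) ≠ !c := by simpa using hac
      rw [delRunAux_cons_of_ne hac, List.map_cons, List.map_cons, delRunAux_cons_of_ne this, delRun,
        delRun, map_not_delRunAux]

theorem delRunAux_eq_append : ∀ {d : Bool} {w z₁ z₂ : List Bool}, delRunAux c d w = z₁ ++ z₂ →
    ∃ w₁ w₂ d', w = w₁ ++ w₂ ∧ delRunAux c d w₁ = z₁ ∧ delRunAux c d' w₂ = z₂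
  | d, w, [], _, h => ⟨[], w, d, rfl, rfl, h⟩
  | _, [], _ :: _, _, h => nomatch h
  | d, a :: w, b :: z₁, z₂, h => by
    by_cases hac : a = c
    · rw [hac] at h ⊢
      cases d
      · rw [delRunAux_false_cons_self, List.cons_append, List.cons.injEq] at h
        obtain ⟨rfl, h⟩ := h
        obtain ⟨w₁, w₂, d', rfl, rfl, rfl⟩ := delRunAux_eq_append h
        exact ⟨c :: w₁, w₂, d', rfl, delRunAux_false_cons_self, rfl⟩
      · rw [delRunAux_true_cons_self] at h
        obtain ⟨w₁, w₂, d', rfl, h₁, rfl⟩ := delRunAux_eq_append h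
        exact ⟨c :: w₁, w₂, d', rfl, by rw [delRunAux_true_cons_self, h₁], rfl⟩
    · rw [delRunAux_cons_of_ne hac, List.cons_append, List.cons.injEq] at h
      obtain ⟨rfl, h⟩ := h
      obtain ⟨w₁, w₂, d', rfl, rfl, rfl⟩ := delRunAux_eq_append h
      exact ⟨a :: w₁, w₂, d', rfl, delRunAux_cons_of_ne hac, rfl⟩

end DelRun

/-- The Sturmian substitution `0 ↦ 0, 1 ↦ 10`; `delRun false` maps `0 · psi v` back to `v`. -/
def psi : List Bool → List Bool
  | [] => []
  | true :: l => true :: false :: psi l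
  | false :: l => false :: psi l

@[simp]
theorem length_psi : ∀ l : List Bool, (psi l).length = l.length + l.count true
  | [] => rfl
  | true :: l => by simp [psi, length_psi l]; omega
  | false :: l => by simp [psi, length_psi l]; omega

@[simp]
theorem count_true_psi : ∀ l : List Bool, (psi l).count true = l.count true
  | [] => rfl
  | true :: l => by simp [psi, count_true_psi l]
  | false :: l => by simp [psi, count_true_psi l]

theorem eq_psi_of_suffix : ∀ {x t : List Bool}, t <:+ false :: psi x →
    ∃ y, y <:+ x ∧ (t = psi y ∨ t = false :: psi y)
  | [], t, h => by
    rcases List.suffix_cons_iff.mp h with rfl | h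
    · exact ⟨[], List.suffix_refl _, Or.inr rfl⟩
    · exact ⟨[], List.suffix_refl _, Or.inl (List.suffix_nil.mp h)⟩
  | a :: x, t, h => by
    rcases List.suffix_cons_iff.mp h with rfl | h
    · exact ⟨a :: x, List.suffix_refl _, Or.inr rfl⟩
    have shift : ∀ {t}, t <:+ false :: psi x →
        ∃ y, y <:+ a :: x ∧ (t = psi y ∨ t = false :: psi y) :=
      fun ht => by
        obtain ⟨y, hy, ht⟩ := eq_psi_of_suffix ht
        exact ⟨y, hy.trans (List.suffix_cons a x), ht⟩
    cases a with
    | false => exact shift h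
    | true =>
      rcases List.suffix_cons_iff.mp h with rfl | h
      · exact ⟨true :: x, List.suffix_refl _, Or.inl rfl⟩
      · exact shift h

theorem eq_psi_of_prefix : ∀ {x u : List Bool}, u <+: psi x →
    ∃ y b, b ≤ 1 ∧ y ++ List.replicate b true <+: x ∧ u = psi y ++ List.replicate b true
  | [], u, h => ⟨[], 0, zero_le_one, List.nil_prefix, List.prefix_nil.mp h⟩
  | a :: x, u, h => by
    have extend : ∀ {u'}, u' <+: psi x → ∃ y b, b ≤ 1 ∧ y ++ List.replicate b true <+: a :: x ∧
        psi [a] ++ u' = psi y ++ List.replicate b true := fun hu' => by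
      obtain ⟨y, b, hb, hy, rfl⟩ := eq_psi_of_prefix hu'
      exact ⟨a :: y, b, hb, List.cons_prefix_cons.mpr ⟨rfl, hy⟩, by cases a <;> rfl⟩
    cases a with
    | false =>
      rcases List.prefix_cons_iff.mp h with rfl | ⟨u', rfl, hu'⟩
      · exact ⟨[], 0, zero_le_one, List.nil_prefix, rfl⟩
      · exact extend hu'
    | true =>
      rcases List.prefix_cons_iff.mp h with rfl | ⟨u', rfl, hu'⟩
      · exact ⟨[], 0, zero_le_one, List.nil_prefix, rfl⟩
      rcases List.prefix_cons_iff.mp hu' with rfl | ⟨u'', rfl, hu''⟩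
      · exact ⟨[], 1, le_rfl, by simp, rfl⟩
      · exact extend hu''

theorem eq_psi_of_infix {u v : List Bool} (h : u <:+: false :: psi v) :
    ∃ a b y, a ≤ 1 ∧ b ≤ 1 ∧ y ++ List.replicate b true <:+: v ∧
      u = List.replicate a false ++ psi y ++ List.replicate b true := by
  obtain ⟨t, hut, htv⟩ := List.infix_iff_prefix_suffix.mp h
  obtain ⟨x, hxv, rfl | rfl⟩ := eq_psi_of_suffix htv
  · obtain ⟨y, b, hb, hyx, rfl⟩ := eq_psi_of_prefix hut
    exact ⟨0, b, y, zero_le_one, hb, hyx.isInfix.trans hxv.isInfix, rfl⟩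
  · rcases List.prefix_cons_iff.mp hut with rfl | ⟨u, rfl, hux⟩
    · exact ⟨0, 0, [], zero_le_one, zero_le_one, List.nil_infix, rfl⟩
    obtain ⟨y, b, hb, hyx, rfl⟩ := eq_psi_of_prefix hux
    exact ⟨1, b, y, le_rfl, hb, hyx.isInfix.trans hxv.isInfix, rfl⟩

theorem BalancedWord.cons_false_psi {k : ℕ} {v : List Bool} (hk : 1 ≤ k)
    (h : BalancedWord k v) : BalancedWord k (false :: psi v) := by
  suffices key : ∀ u₁ u₂, u₁ <:+: false :: psi v → u₂ <:+: false :: psi v →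
      u₁.length = u₂.length → u₁.count true ≤ u₂.count true + k by
    intro u₁ u₂ h₁ h₂ hl
    have := key u₁ u₂ h₁ h₂ hl
    have := key u₂ u₁ h₂ h₁ hl.symm
    rw [abs_le]
    omega
  intro u₁ u₂ h₁ h₂ hl
  obtain ⟨a₁, b₁, y₁, ha₁, hb₁, hy₁, rfl⟩ := eq_psi_of_infix h₁
  obtain ⟨a₂, b₂, y₂, ha₂, hb₂, hy₂, rfl⟩ := eq_psi_of_infix h₂
  simp only [List.length_append, List.length_replicate, length_psi, List.count_append,
    List.count_replicate, beq_true, Bool.false_eq_true, ↓reduceIte, count_true_psi,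
    zero_add] at hl ⊢
  -- `u₁` has no more `1`s than the factor `y₁ 1^b₁` of `v`, and `u₂` no fewer than `y₂`
  rcases le_or_gt (y₁.length + b₁) y₂.length with hlen | hlen
  · have := h.count_le_of_length_le hy₁ ((List.prefix_append _ _).isInfix.trans hy₂)
      (by simpa using hlen)
    simp only [List.count_append, List.count_replicate_self] at this
    omega
  · omega

theorem prefix_psi_delRunAux_false : ∀ {w : List Bool}, ¬ [true, true] <:+: w →
    w <+: psi (delRunAux false false w)
  | [], _ => List.nil_prefix
  | [true], _ => by simp [delRunAux, psi]
  | false :: w, h => by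
    rw [delRunAux_false_cons_self]
    exact List.cons_prefix_cons.mpr ⟨rfl, prefix_psi_delRunAux_false (not_pair_infix_of_cons h)⟩
  | true :: true :: w, h => absurd (List.prefix_append [true, true] w).isInfix h
  | true :: false :: w, h => by
    rw [delRunAux_cons_of_ne (by decide), delRun, delRunAux_true_cons_self]
    exact List.cons_prefix_cons.mpr ⟨rfl, List.cons_prefix_cons.mpr
      ⟨rfl, prefix_psi_delRunAux_false (not_pair_infix_of_cons (not_pair_infix_of_cons h))⟩⟩

theorem infix_cons_false_psi_delRun {w : List Bool} (h : ¬ [true, true] <:+: w) :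
    w <:+: false :: psi (delRun false w) := by
  rcases w with _ | ⟨_ | _, w⟩
  · exact List.nil_infix
  · rw [delRun, delRunAux_true_cons_self]
    exact (List.cons_prefix_cons.mpr
      ⟨rfl, prefix_psi_delRunAux_false (not_pair_infix_of_cons h)⟩).isInfix
  · have hpre := prefix_psi_delRunAux_false h
    rw [delRunAux_cons_of_ne (by decide)] at hpre
    exact List.infix_cons hpre.isInfix

section Lift

variable {k : ℕ} {w : List Bool}

theorem BalancedWord.of_delRun (hk : 1 ≤ k) (c : Bool) (h : ¬ [!c, !c] <:+: w)
    (hb : BalancedWord k (delRun c w)) : BalancedWord k w := by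
  cases c
  · exact (hb.cons_false_psi hk).of_infix (infix_cons_false_psi_delRun h)
  · have hneg : ¬ [true, true] <:+: w.map not := fun h' =>
      h (Bool.involutive_not.list_map w ▸ h'.map not)
    have hb' : BalancedWord k (delRun false (w.map not)) := by
      rw [delRun, ← Bool.not_true, ← map_not_delRunAux]
      exact hb.map_not
    rw [← Bool.involutive_not.list_map w]
    exact ((hb'.cons_false_psi hk).of_infix (infix_cons_false_psi_delRun hneg)).map_not

theorem BalancedWord.of_delRunAux (hk : 1 ≤ k) (c d : Bool) (h : ¬ [!c, !c] <:+: w)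
    (hb : BalancedWord k (delRunAux c d w)) : BalancedWord k w := by
  cases d
  · rw [← delRunAux_true_cons_self, ← delRun] at hb
    have hc : ¬ [!c, !c] <:+: c :: w := not_pair_infix_cons (by cases c <;> decide) h
    exact (hb.of_delRun hk c hc).of_infix (List.suffix_cons c w).isInfix
  · exact hb.of_delRun hk c h

end Lift

def Alternating (w : List Bool) : Prop := ∀ x : Bool, ¬ [x, x] <:+: w

/-- No factor `!c !c`, and all runs of `c`s are single except at most one of length two. -/
def AtMostOneDouble (c : Bool) (w : List Bool) : Prop :=
  ¬ [!c, !c] <:+: w ∧ (delRun c w).count c ≤ 1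

def AlternatingThenOneDouble (w : List Bool) : Prop :=
  ∃ u v, w = u ++ v ∧ Alternating u ∧ ∃ c, AtMostOneDouble c v

def SplitsBalanced (w : List Bool) : Prop :=
  ∃ u v, w = u ++ v ∧ BalancedWord 1 u ∧ BalancedWord 1 v

section Words

variable {a b c : Bool} {l w : List Bool}

theorem alternating_of_length_le_one (h : w.length ≤ 1) : Alternating w :=
  fun _ hx => by simpa using hx.length_le.trans h

theorem Alternating.cons_cons (hab : a ≠ b) (h : Alternating (b :: l)) :
    Alternating (a :: b :: l) :=
  fun x => not_pair_infix_cons_cons hab (h x)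

theorem Alternating.atMostOneDouble (h : Alternating w) (c : Bool) : AtMostOneDouble c w :=
  ⟨h _, by rw [count_delRun_eq_zero (h c)]; exact zero_le_one⟩

theorem Alternating.atMostOneDouble_cons_self (h : Alternating (c :: l)) :
    AtMostOneDouble c (c :: c :: l) := by
  refine ⟨not_pair_infix_cons (by cases c <;> decide) (h _), ?_⟩
  rw [delRun, delRunAux_true_cons_self, delRunAux_false_cons_self, List.count_cons_self]
  rcases l with _ | ⟨b, l⟩
  · rfl
  · have hbc : b ≠ c := by
      rintro rfl
      exact h b (List.prefix_append [b, b] l).isInfix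
    rw [delRunAux_cons_of_ne hbc, List.count_cons_of_ne hbc,
      count_delRun_eq_zero (not_pair_infix_of_cons (not_pair_infix_of_cons (h c)))]

theorem AtMostOneDouble.cons_cons (hab : a ≠ b) (h : AtMostOneDouble c (b :: l)) :
    AtMostOneDouble c (a :: b :: l) := by
  refine ⟨not_pair_infix_cons_cons hab h.1, ?_⟩
  have hcount : (delRun c (a :: b :: l)).count c = (delRun c (b :: l)).count c := by
    by_cases hac : a = c
    · subst hac
      have hb : delRun a (b :: l) = b :: delRun a l := delRunAux_cons_of_ne hab.symm
      rw [hb, delRun, delRunAux_true_cons_self, delRunAux_cons_of_ne hab.symm]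
    · rw [delRun, delRunAux_cons_of_ne hac, List.count_cons_of_ne hac]
  exact hcount ▸ h.2

theorem AtMostOneDouble.balancedWord (h : AtMostOneDouble c w) : BalancedWord 1 w :=
  BalancedWord.of_delRun le_rfl c h.1 (balancedWord_of_count_le c h.2)

theorem AlternatingThenOneDouble.cons_cons (hab : a ≠ b)
    (h : AlternatingThenOneDouble (b :: l)) : AlternatingThenOneDouble (a :: b :: l) := by
  obtain ⟨u, v, huv, hu, hv⟩ := h
  rcases u with _ | ⟨b', u⟩
  · rw [List.nil_append] at huv
    exact ⟨[a], v, huv ▸ rfl, alternating_of_length_le_one le_rfl, hv⟩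
  · obtain ⟨rfl, rfl⟩ := List.cons.inj huv
    exact ⟨a :: b :: u, v, rfl, hu.cons_cons hab, hv⟩

theorem AtMostOneDouble.alternatingThenOneDouble_cons_self (h : AtMostOneDouble c (a :: l)) :
    AlternatingThenOneDouble (a :: a :: l) :=
  ⟨[a], a :: l, rfl, alternating_of_length_le_one le_rfl, c, h⟩

theorem AlternatingThenOneDouble.splitsBalanced (h : AlternatingThenOneDouble w) :
    SplitsBalanced w := by
  obtain ⟨u, v, rfl, hu, c, hv⟩ := h
  exact ⟨u, v, rfl, (hu.atMostOneDouble true).balancedWord, hv.balancedWord⟩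

theorem SplitsBalanced.of_balancedWord (h : BalancedWord 1 w) : SplitsBalanced w :=
  ⟨w, [], (List.append_nil w).symm, h, balancedWord_of_count_true_le (by simp)⟩

theorem SplitsBalanced.of_cons (h : SplitsBalanced (a :: w)) : SplitsBalanced w := by
  obtain ⟨u, v, huv, hu, hv⟩ := h
  rcases u with _ | ⟨b, u⟩
  · exact ⟨[], w, rfl, hu, hv.of_infix (huv ▸ List.suffix_cons a w).isInfix⟩
  · obtain ⟨-, rfl⟩ := List.cons.inj huv
    exact ⟨u, v, rfl, hu.of_infix (List.suffix_cons b u).isInfix, hv⟩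

theorem SplitsBalanced.of_delRun (h : ¬ [!c, !c] <:+: w) (hs : SplitsBalanced (delRun c w)) :
    SplitsBalanced w := by
  obtain ⟨z₁, z₂, hz, hz₁, hz₂⟩ := hs
  obtain ⟨w₁, w₂, d, rfl, rfl, rfl⟩ := delRunAux_eq_append hz
  exact ⟨w₁, w₂, rfl,
    hz₁.of_delRun le_rfl c fun h₁ => h (h₁.trans (List.prefix_append w₁ w₂).isInfix),
    hz₂.of_delRunAux le_rfl c d fun h₂ => h (h₂.trans (List.suffix_append w₁ w₂).isInfix)⟩

theorem SplitsBalanced.of_desub {v : List Bool} (h : Desub w v) (hs : SplitsBalanced v) :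
    SplitsBalanced w := by
  obtain ⟨-, ⟨h₁₁, rfl⟩ | ⟨h₀₀, rfl⟩⟩ := h
  exacts [hs.of_delRun (c := false) h₁₁, hs.of_delRun (c := true) h₀₀]

end Words

theorem isSome_autTraj_cons {σ : Type} {step : σ → Bool → Option σ} {q : σ} {a : Bool}
    {w : List Bool} :
    (autTraj step q (a :: w)).isSome ↔ ∃ q', step q a = some q' ∧ (autTraj step q' w).isSome := by
  simp only [autTraj]
  cases step q a <;> simp

/-- The label shared by all transitions into `q`. -/
def noInLetter : NOState → Bool
  | .B | .T | .U | .C => true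
  | .R | .S | .E | .D => false

/-- Satisfied by `noInLetter q :: w` whenever `w` is readable from `q`; keeping the incoming
letter makes it independent of the path into `q`. -/
def NOInv : NOState → List Bool → Prop
  | .U, x | .E, x => Alternating x
  | .S, x | .T, x => AtMostOneDouble true x
  | .C, x | .D, x => AtMostOneDouble false x
  | .B, x | .R, x => AlternatingThenOneDouble x

theorem noInv_singleton (q : NOState) : NOInv q [noInLetter q] := by
  have hsingle : Alternating [noInLetter q] := alternating_of_length_le_one le_rfl
  cases q
  case U | E => exact hsingle
  case S | T => exact hsingle.atMostOneDouble true
  case C | D => exact hsingle.atMostOneDouble false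
  case B | R => exact ⟨[], _, rfl, alternating_of_length_le_one zero_le_one, true,
    hsingle.atMostOneDouble true⟩

theorem NOInv.of_noStep {q q' : NOState} {a : Bool} {w : List Bool}
    (hstep : noStep q a = some q') (h : NOInv q' (noInLetter q' :: w)) :
    NOInv q (noInLetter q :: a :: w) := by
  cases q <;> cases a <;> cases hstep
  -- transitions inside the loops `B⇄R`, `S⇄T`, `C⇄D`, `U⇄E` alternate letters
  case B.false | R.true => exact AlternatingThenOneDouble.cons_cons (by decide) h
  case S.true | T.false | C.false | D.true => exact AtMostOneDouble.cons_cons (by decide) h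
  case U.false | E.true => exact Alternating.cons_cons (by decide) h
  -- the four others create a square `aa`
  case B.true | R.false => exact AtMostOneDouble.alternatingThenOneDouble_cons_self h
  case T.true | D.false => exact Alternating.atMostOneDouble_cons_self h

theorem noInv_of_isSome_autTraj : ∀ {q : NOState} {w : List Bool},
    (autTraj noStep q w).isSome → NOInv q (noInLetter q :: w)
  | q, [], _ => noInv_singleton q
  | _, _ :: _, h => by
    obtain ⟨q', hstep, h'⟩ := isSome_autTraj_cons.mp h
    exact NOInv.of_noStep hstep (noInv_of_isSome_autTraj h')

theorem NOInv.splitsBalanced {q : NOState} {w : List Bool} (h : NOInv q w) : SplitsBalanced w := by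
  cases q
  case U | E => exact .of_balancedWord (Alternating.atMostOneDouble h true).balancedWord
  case S | T | C | D => exact .of_balancedWord (AtMostOneDouble.balancedWord h)
  case B | R => exact AlternatingThenOneDouble.splitsBalanced h

theorem NonOscDiagonal.splitsBalanced {w : List Bool} (h : NonOscDiagonal w) :
    SplitsBalanced w := by
  obtain ⟨q, hq⟩ := h
  exact (noInv_of_isSome_autTraj hq).splitsBalanced.of_cons

/-- every tangent analytic word is a concatenation of two 1-balanced words. -/
theorem tangent_analytic_concat_balanced (w : List Bool) (h : TangentAnalytic w) :
    ∃ u v : List Bool, w = u ++ v ∧ BalancedWord 1 u ∧ BalancedWord 1 v := by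
  obtain ⟨v, hwv, hv⟩ := h
  induction hwv using Relation.ReflTransGen.head_induction_on with
  | refl => exact hv.splitsBalanced
  | head hstep _ ih => exact SplitsBalanced.of_desub hstep ih
end

section
/- The complexity of the language T^∞ of tangent words grows exponentially: there exist a constant c > 1 and an integer N such that for all n ≥ N, p_n(T^∞) ≥ c^n, where p_n(T^∞) is the number of tangent words of length n. -/
/-!
Reading `01` or `10` from state `R` of the diagonal automaton returns to `R`, so every image
`μ(u)` of a word `u` under the Thue–Morse morphism `μ : 0 ↦ 01, 1 ↦ 10` is diagonal, hence
tangent with no desubstitution at all. Since `μ` is injective, there are at least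
`2 ^ ⌊n / 2⌋ ≥ (2 ^ (1 / 4)) ^ n` tangent words of length `n ≥ 2`.
-/

def thueMorse (w : List Bool) : List Bool := w.flatMap fun x => [x, !x]

@[simp]
lemma thueMorse_nil : thueMorse [] = [] := rfl

@[simp]
lemma thueMorse_cons (x : Bool) (w : List Bool) :
    thueMorse (x :: w) = x :: (!x) :: thueMorse w := rfl

@[simp]
lemma length_thueMorse (w : List Bool) : (thueMorse w).length = 2 * w.length := by
  induction w with
  | nil => rfl
  | cons x w ih => simp only [thueMorse_cons, List.length_cons, ih]; ring

lemma thueMorse_injective : Function.Injective thueMorse := by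
  intro u v h
  induction u generalizing v with
  | nil => cases v <;> simp_all
  | cons x u ih =>
    cases v with
    | nil => simp at h
    | cons y v =>
      simp only [thueMorse_cons, List.cons.injEq] at h
      rw [h.1, ih h.2.2]

lemma isSome_autTraj_diagStep_thueMorse_append {t : List Bool}
    (ht : (autTraj diagStep .R t).isSome) (w : List Bool) :
    (autTraj diagStep .R (thueMorse w ++ t)).isSome := by
  induction w with
  | nil => simpa using ht
  | cons x w ih =>
    cases x <;> cases h : autTraj diagStep .R (thueMorse w ++ t) <;>
      simp_all [autTraj, diagStep]

lemma Diagonal.mem_Tinf {w : List Bool} (hw : Diagonal w) : w ∈ Tinf :=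
  ⟨w, .refl, hw⟩

lemma card_le_pcount_of_injective {ι : Type*} [Finite ι] {L : Set (List Bool)} {n : ℕ}
    {f : ι → List Bool} (hf : Function.Injective f) (hL : ∀ i, f i ∈ L)
    (hn : ∀ i, (f i).length = n) : Nat.card ι ≤ pcount L n := by
  rw [← Set.ncard_range_of_injective hf]
  refine Set.ncard_le_ncard ?_ ((List.finite_length_eq Bool n).subset fun w hw => hw.2)
  rintro _ ⟨i, rfl⟩
  exact ⟨hL i, hn i⟩

lemma two_pow_half_le_pcount_Tinf (n : ℕ) : 2 ^ (n / 2) ≤ pcount Tinf n := by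
  let t := List.replicate (n % 2) false
  have ht : (autTraj diagStep .R t).isSome := by
    rcases Nat.mod_two_eq_zero_or_one n with h | h <;> simp [t, h, autTraj, diagStep]
  let f (b : Fin (n / 2) → Bool) : List Bool := thueMorse (List.ofFn b) ++ t
  have hf : Function.Injective f := fun b b' h =>
    List.ofFn_injective (thueMorse_injective (List.append_cancel_right h))
  have hcard := card_le_pcount_of_injective (L := Tinf) (n := n) hf
    (fun b => Diagonal.mem_Tinf ⟨.R, isSome_autTraj_diagStep_thueMorse_append ht _⟩)
    (fun b => by simp only [f, t, List.length_append, length_thueMorse, List.length_ofFn,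
      List.length_replicate]; omega)
  simpa using hcard

/-- the complexity of `T^∞` grows exponentially:
`p_n(T^∞) ≥ c^n` for all large `n`, for some constant `c > 1`. -/
theorem tangent_complexity_exponential :
    ∃ c : ℝ, 1 < c ∧ ∃ N : ℕ, ∀ n : ℕ, N ≤ n → c ^ n ≤ (pcount Tinf n : ℝ) := by
  set c := √(√2)
  have hc : 1 < c := Real.lt_sqrt_of_sq_lt (by simpa using Real.one_lt_sqrt_two)
  have hc4 : c ^ 4 = 2 := by
    rw [show 4 = 2 * 2 from rfl, pow_mul, Real.sq_sqrt (by positivity),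
      Real.sq_sqrt (by positivity)]
  refine ⟨c, hc, 2, fun n hn => ?_⟩
  calc c ^ n ≤ c ^ (4 * (n / 2)) := pow_le_pow_right₀ hc.le (by omega)
    _ = 2 ^ (n / 2) := by rw [pow_mul, hc4]
    _ ≤ pcount Tinf n := mod_cast two_pow_half_le_pcount_Tinf n
end
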